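/- arXiv:math/0701684 — 4 statements merged into one kernel-verified Lean document; each statement's English description precedes it below -/
import Mathlib

section
/- If f : G → G' is a morphism of graph models, M is a λ-term, ρ an environment in G, and α ∈ M^G_ρ, then f(α) ∈ M^{G'}_{f∘ρ}, where (f∘ρ)(x) = f(ρ(x)) (direct image). -/
/-- Untyped λ-terms in de Bruijn notation. -/
inductive Term : Type
  | var : ℕ → Term
  | app : Term → Term → Term
  | lam : Term → Term
  deriving DecidableEq

namespace Term

/-- Lifting (shifting) of de Bruijn indices at cutoff `d`. -/
def lift (d : ℕ) : Term → Term
  | var n => if n < d then var n else var (n + 1)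
  | app M N => app (lift d M) (lift d N)
  | lam M => lam (lift (d + 1) M)

/-- Capture-avoiding substitution of `s` for index `k`. -/
def subst : Term → ℕ → Term → Term
  | var n, k, s => if n = k then s else if k < n then var (n - 1) else var n
  | app M N, k, s => app (subst M k s) (subst N k s)
  | lam M, k, s => lam (subst M (k + 1) (lift 0 s))

/-- One-step β-reduction (compatible closure of the β-rule). -/
inductive Step : Term → Term → Prop
  | beta (M N : Term) : Step (app (lam M) N) (subst M 0 N)
  | appL {M M' : Term} (N : Term) : Step M M' → Step (app M N) (app M' N)
  | appR (M : Term) {N N' : Term} : Step N N' → Step (app M N) (app M N')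
  | xi {M M' : Term} : Step M M' → Step (lam M) (lam M')

/-- β-conversion: the equivalence relation generated by one-step β-reduction. -/
def BetaConv : Term → Term → Prop := Relation.EqvGen Step

/-- An effective bijective numeration of λ-terms. -/
def encodeT : Term → ℕ
  | var n => 3 * n
  | app M N => 3 * Nat.pair (encodeT M) (encodeT N) + 1
  | lam M => 3 * encodeT M + 2

/-- `ClosedUnder k M`: all free de Bruijn indices of `M` are `< k`. -/
def ClosedUnder : ℕ → Term → Prop
  | k, var n => n < k
  | k, app M N => ClosedUnder k M ∧ ClosedUnder k N
  | k, lam M => ClosedUnder (k + 1) M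

/-- Closed λ-terms. -/
def Closed (M : Term) : Prop := ClosedUnder 0 M

end Term

/-- A set of λ-terms is recursively enumerable (w.r.t. the fixed effective
numeration `encodeT`) if membership is the domain of a partial recursive function. -/
def TermRE (X : Set Term) : Prop :=
  ∃ f : ℕ →. ℕ, Nat.Partrec f ∧ ∀ M : Term, M ∈ X ↔ (f (Term.encodeT M)).Dom

/-- A set of λ-terms closed under β-conversion. -/
def BetaClosed (X : Set Term) : Prop :=
  ∀ M N : Term, M ∈ X → Term.BetaConv M N → N ∈ X

/-- Extend an environment by pushing a new value for de Bruijn index `0`. -/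
def consEnv {G : Type*} (d : Set G) (ρ : ℕ → Set G) : ℕ → Set G :=
  fun k => match k with
  | 0 => d
  | k + 1 => ρ k

/-- Interpretation of λ-terms in a graph model `(G, c)`, where `c : G* × G → G`
is the (injective, total) code map and environments send variables to subsets of `G`. -/
def ginterp {G : Type*} (c : Finset G × G → G) : Term → (ℕ → Set G) → Set G
  | Term.var n, ρ => ρ n
  | Term.app M N, ρ =>
      {α | ∃ a : Finset G, ↑a ⊆ ginterp c N ρ ∧ c (a, α) ∈ ginterp c M ρ}
  | Term.lam M, ρ =>
      {β | ∃ (a : Finset G) (α : G), β = c (a, α) ∧ α ∈ ginterp c M (consEnv ↑a ρ)}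

/-- The λ-term `δ = λx.xx`. -/
def deltaTerm : Term := Term.lam (Term.app (Term.var 0) (Term.var 0))

/-- The λ-term `Ω = (λx.xx)(λx.xx)`. -/
def omegaTerm : Term := Term.app deltaTerm deltaTerm

/-! The proof is a structural induction on the term. For an application the finite witness `a`
is transported to `f '' a`; for an abstraction one uses that taking direct images commutes with
extending the environment, `f ∘ ρ[x := a] = (f ∘ ρ)[x := f a]`. -/

theorem image_consEnv {G G' : Type*} (f : G → G') (d : Set G) (ρ : ℕ → Set G) :
    (fun n => f '' consEnv d ρ n) = consEnv (f '' d) (fun n => f '' ρ n) := by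
  funext n
  cases n <;> rfl

section GraphModelMorphism

variable {G G' : Type*} [DecidableEq G'] {c : Finset G × G → G} {c' : Finset G' × G' → G'}
  {f : G → G'}

theorem mapsTo_ginterp_app (hf : ∀ (a : Finset G) (α : G), f (c (a, α)) = c' (a.image f, f α))
    {M N : Term} {ρ : ℕ → Set G} {ρ' : ℕ → Set G'}
    (hM : Set.MapsTo f (ginterp c M ρ) (ginterp c' M ρ'))
    (hN : Set.MapsTo f (ginterp c N ρ) (ginterp c' N ρ')) :
    Set.MapsTo f (ginterp c (Term.app M N) ρ) (ginterp c' (Term.app M N) ρ') := by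
  rintro α ⟨a, ha, hcode⟩
  refine ⟨a.image f, ?_, ?_⟩
  · rw [Finset.coe_image]
    exact (hN.mono_left ha).image_subset
  · rw [← hf]
    exact hM hcode

theorem mapsTo_ginterp_lam (hf : ∀ (a : Finset G) (α : G), f (c (a, α)) = c' (a.image f, f α))
    {M : Term} {ρ : ℕ → Set G} {ρ' : ℕ → Set G'}
    (hM : ∀ a : Finset G, Set.MapsTo f (ginterp c M (consEnv ↑a ρ))
      (ginterp c' M (consEnv ↑(a.image f) ρ'))) :
    Set.MapsTo f (ginterp c (Term.lam M) ρ) (ginterp c' (Term.lam M) ρ') := by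
  rintro _ ⟨a, α, rfl, hα⟩
  exact ⟨a.image f, f α, hf a α, hM a hα⟩

theorem mapsTo_ginterp_image (hf : ∀ (a : Finset G) (α : G), f (c (a, α)) = c' (a.image f, f α))
    (M : Term) (ρ : ℕ → Set G) :
    Set.MapsTo f (ginterp c M ρ) (ginterp c' M (fun n => f '' ρ n)) := by
  induction M generalizing ρ with
  | var n => exact Set.mapsTo_image f (ρ n)
  | app M N ihM ihN => exact mapsTo_ginterp_app hf (ihM ρ) (ihN ρ)
  | lam M ih =>
    refine mapsTo_ginterp_lam hf fun a => ?_
    rw [Finset.coe_image, ← image_consEnv]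
    exact ih _

end GraphModelMorphism

theorem morphism_preserves_interp_general {G G' : Type*}
    [DecidableEq G'] (c : Finset G × G → G) (c' : Finset G' × G' → G')
    (f : G → G') (hf : ∀ (a : Finset G) (α : G), f (c (a, α)) = c' (a.image f, f α))
    (M : Term) (ρ : ℕ → Set G) (α : G) (hα : α ∈ ginterp c M ρ) :
    f α ∈ ginterp c' M (fun n => f '' ρ n) :=
  mapsTo_ginterp_image hf M ρ hα

/-- Morphisms of graph models preserve membership in interpretations:
if `f : G → G'` is a morphism and `α ∈ M^G_ρ`, then `f(α) ∈ M^{G'}_{f∘ρ}`. -/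
theorem morphism_preserves_interp {G G' : Type*} [Infinite G] [Infinite G']
    [DecidableEq G'] (c : Finset G × G → G) (c' : Finset G' × G' → G')
    (hc : Function.Injective c) (hc' : Function.Injective c')
    (f : G → G') (hf : ∀ (a : Finset G) (α : G), f (c (a, α)) = c' (a.image f, f α))
    (M : Term) (ρ : ℕ → Set G) (α : G) (hα : α ∈ ginterp c M ρ) :
    f α ∈ ginterp c' M (fun n => f '' ρ n) :=
  morphism_preserves_interp_general c c' f hf M ρ α hα
end

section
/- Let M be a λ-term, G a graph model, and suppose α ∈ M^G_ρ for some environment ρ. Then there exists a finite subpair A of G such that α ∈ M^A_{ρ∩A}, where (ρ∩A)(x) = ρ(x) ∩ A. -/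
/-- A partial pair on an ambient set of "web elements" `G`: a carrier set `A ⊆ G`
together with a partial code map `c_A : A* × A ⇀ A` (represented by `Option`). -/
structure PartialPair (G : Type*) where
  carrier : Set G
  code : Finset G × G → Option G

namespace PartialPair

/-- Well-formedness of a partial pair: the domain and values of the partial code
map lie in the carrier, and the code map is injective (where defined). -/
def Good {G : Type*} (P : PartialPair G) : Prop :=
  (∀ (a : Finset G) (α γ : G), P.code (a, α) = some γ →
      ↑a ⊆ P.carrier ∧ α ∈ P.carrier ∧ γ ∈ P.carrier) ∧
  (∀ (p q : Finset G × G) (γ : G), P.code p = some γ → P.code q = some γ → p = q)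

/-- `P.Sub Q`: `P` is a subpair of `Q` (`P ≤ Q`): the carrier of `P` is contained in
that of `Q` and the code map of `Q` extends that of `P`. -/
def Sub {G : Type*} (P Q : PartialPair G) : Prop :=
  P.carrier ⊆ Q.carrier ∧
  ∀ (p : Finset G × G) (γ : G), P.code p = some γ → Q.code p = some γ

/-- Interpretation of λ-terms in a partial pair, using only the defined part
of the partial code map. -/
def interp {G : Type*} (P : PartialPair G) : Term → (ℕ → Set G) → Set G
  | Term.var n, ρ => ρ n
  | Term.app M N, ρ =>
      {α | α ∈ P.carrier ∧ ∃ a : Finset G, ↑a ⊆ interp P N ρ ∧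
        ∃ γ : G, P.code (a, α) = some γ ∧ γ ∈ interp P M ρ}
  | Term.lam M, ρ =>
      {β | ∃ (a : Finset G) (α : G), P.code (a, α) = some β ∧
        α ∈ interp P M (consEnv ↑a ρ)}

end PartialPair

/-- The total pair associated to a graph model `(G, c)` (carrier is all of `G`). -/
def fullPair {G : Type*} (c : Finset G × G → G) : PartialPair G :=
  ⟨Set.univ, fun p => some (c p)⟩

/-- The bottom environment, mapping every variable to `∅`. -/
def botEnv {G : Type*} : ℕ → Set G := fun _ => ∅


/-! Induction on `M`, proving the stronger claim that the membership already holds in the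
restriction of the graph model to every large enough finite carrier `S` and finite code domain `D`
(eventually along `atTop`). Eventual truth is stable under finite intersections, which handles the
application case: each of the finitely many elements of the argument `a` has its own finite
witness. -/

open Filter

section

variable {G : Type*}

theorem PartialPair.interp_mono (P : PartialPair G) (M : Term) {ρ₁ ρ₂ : ℕ → Set G}
    (h : ∀ n, ρ₁ n ⊆ ρ₂ n) : P.interp M ρ₁ ⊆ P.interp M ρ₂ := by
  induction M generalizing ρ₁ ρ₂ with
  | var n => exact h n
  | app M N ihM ihN =>
    rintro α ⟨hα, a, haN, γ, hcode, hγ⟩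
    exact ⟨hα, a, haN.trans (ihN h), γ, hcode, ihM h hγ⟩
  | lam M ihM =>
    rintro β ⟨a, α, hcode, hα⟩
    refine ⟨a, α, hcode, ihM ?_ hα⟩
    rintro (_ | n)
    exacts [subset_rfl, h n]

open Classical in
noncomputable def restrictPair (c : Finset G × G → G) (S : Set G)
    (D : Set (Finset G × G)) : PartialPair G :=
  ⟨S, fun p => if p ∈ D then some (c p) else none⟩

theorem restrictPair_code_of_mem (c : Finset G × G → G) (S : Set G)
    {D : Set (Finset G × G)} {p : Finset G × G} (hp : p ∈ D) :
    (restrictPair c S D).code p = some (c p) := by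
  simp [restrictPair, hp]

theorem restrictPair_sub_fullPair (c : Finset G × G → G) (S : Set G)
    (D : Set (Finset G × G)) : (restrictPair c S D).Sub (fullPair c) := by
  refine ⟨Set.subset_univ S, fun p γ h => ?_⟩
  by_cases hp : p ∈ D <;> simp_all [restrictPair, fullPair]

theorem eventually_mem_interp_restrictPair (c : Finset G × G → G) (M : Term)
    {ρ : ℕ → Set G} {α : G} (hα : α ∈ (fullPair c).interp M ρ) :
    ∀ᶠ x : Finset G × Finset (Finset G × G) in atTop,
      α ∈ (restrictPair c x.1 x.2).interp M (fun n => ρ n ∩ x.1) := by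
  induction M generalizing ρ α with
  | var n =>
    filter_upwards [eventually_ge_atTop ({α}, ∅)] with x hx
    exact ⟨hα, hx.1 (Finset.mem_singleton_self α)⟩
  | app M N ihM ihN =>
    obtain ⟨-, a, haN, _, ⟨⟩, hγ⟩ := hα
    have hN : ∀ᶠ x : Finset G × Finset (Finset G × G) in atTop,
        ∀ β ∈ a, β ∈ (restrictPair c x.1 x.2).interp N (fun n => ρ n ∩ x.1) :=
      (eventually_all_finset a).2 fun β hβ => ihN (haN hβ)
    filter_upwards [ihM hγ, hN, eventually_ge_atTop ({α}, {(a, α)})] with x hM hN hx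
    exact ⟨hx.1 (Finset.mem_singleton_self α), a, hN,
      _, restrictPair_code_of_mem c _ (hx.2 (Finset.mem_singleton_self _)), hM⟩
  | lam M ihM =>
    obtain ⟨a, α', ⟨⟩, hα'⟩ := hα
    filter_upwards [ihM hα', eventually_ge_atTop (∅, {(a, α')})] with x hM hx
    refine ⟨a, α', restrictPair_code_of_mem c _ (hx.2 (Finset.mem_singleton_self _)),
      PartialPair.interp_mono _ M ?_ hM⟩
    rintro (_ | n)
    exacts [Set.inter_subset_left, subset_rfl]

end

theorem mem_interp_finite_subpair_general {G : Type*}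
    (c : Finset G × G → G)
    (M : Term) (ρ : ℕ → Set G) (α : G)
    (hα : α ∈ (fullPair c).interp M ρ) :
    ∃ A : PartialPair G, A.carrier.Finite ∧ A.Sub (fullPair c) ∧
      α ∈ A.interp M (fun n => ρ n ∩ A.carrier) := by
  classical
  obtain ⟨x, hx⟩ := (eventually_mem_interp_restrictPair c M hα).exists
  exact ⟨restrictPair c x.1 x.2, x.1.finite_toSet, restrictPair_sub_fullPair c _ _, hx⟩

/-- If `α ∈ M^G_ρ` in a graph model `G`, then there is a **finite** subpair `A` of `G`
with `α ∈ M^A_{ρ ∩ A}`. -/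
theorem mem_interp_finite_subpair {G : Type*} [Infinite G]
    (c : Finset G × G → G) (hc : Function.Injective c)
    (M : Term) (ρ : ℕ → Set G) (α : G)
    (hα : α ∈ (fullPair c).interp M ρ) :
    ∃ A : PartialPair G, A.carrier.Finite ∧ A.Sub (fullPair c) ∧
      α ∈ A.interp M (fun n => ρ n ∩ A.carrier) :=
  mem_interp_finite_subpair_general c M ρ α hα
end

section
/- Let A be a partial pair and E_A its completion. Then the interpretation of Ω in E_A is contained in A; in fact, if α ∈ Ω^{E_A} then there is a finite a with (a,α) ∈ dom(c_A), hence α ∈ A. -/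
/-- The ambient universe for the completion of a partial pair on `G`: formal
elements that are either elements of `G` or formal pairs `(a, α)` (with the
finite set `a` represented by a list). -/
inductive Pre (G : Type*) : Type _
  | base : G → Pre G
  | node : List (Pre G) → Pre G → Pre G

noncomputable instance {G : Type*} : DecidableEq (Pre G) := Classical.decEq _

/-- `DomCond P s α`: the formal pair `(s, α)` comes from a pair in the domain of
the partial code map of `P`. -/
def DomCond {G : Type*} (P : PartialPair G) (s : Finset (Pre G)) (α : Pre G) : Prop :=
  ∃ (s₀ : Finset G) (α₀ γ : G),
    s = s₀.image Pre.base ∧ α = Pre.base α₀ ∧ P.code (s₀, α₀) = some γ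

open Classical in
/-- The total code map of the completion: it extends `c_A` (via the embedding
`Pre.base`) and sends each pair outside `dom(c_A)` to the formal pair itself. -/
noncomputable def compCode {G : Type*} (P : PartialPair G) :
    Finset (Pre G) × Pre G → Pre G := fun p =>
  if h : DomCond P p.1 p.2 then Pre.base h.choose_spec.choose_spec.choose
  else Pre.node p.1.toList p.2

/-- The stages `Eₙ` of the completion: `E₀ = A` and
`E_{n+1} = Eₙ ∪ ((Eₙ* × Eₙ) − dom(c_A))`. -/
def compStage {G : Type*} (P : PartialPair G) : ℕ → Set (Pre G)
  | 0 => Pre.base '' P.carrier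
  | n + 1 => compStage P n ∪
      {x | ∃ (s : Finset (Pre G)) (α : Pre G), ↑s ⊆ compStage P n ∧
        α ∈ compStage P n ∧ ¬ DomCond P s α ∧ x = Pre.node s.toList α}

/-- The carrier `E_A = ⋃ₙ Eₙ` of the completion. -/
def compCarrier {G : Type*} (P : PartialPair G) : Set (Pre G) :=
  ⋃ n, compStage P n

open Classical in
/-- The completion of a partial pair `P`, as a (total on its carrier) pair. -/
noncomputable def compPair {G : Type*} (P : PartialPair G) : PartialPair (Pre G) :=
  ⟨compCarrier P, fun p =>
    if ↑p.1 ⊆ compCarrier P ∧ p.2 ∈ compCarrier P then some (compCode P p) else none⟩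

section Aux

variable {G : Type*}

lemma Finset.toList_inj' {a b : Finset (Pre G)} (h : a.toList = b.toList) : a = b := by
  ext x
  rw [← Finset.mem_toList, ← Finset.mem_toList, h]

lemma compStage_mono (P : PartialPair G) : Monotone (compStage P) := by
  apply monotone_nat_of_le_succ
  intro n
  intro x hx
  exact Or.inl hx

lemma node_mem_stage (P : PartialPair G) {s : Finset (Pre G)} {α : Pre G} :
    ∀ {n : ℕ}, Pre.node s.toList α ∈ compStage P n →
      ∃ m, m < n ∧ ↑s ⊆ compStage P m ∧ α ∈ compStage P m ∧ ¬ DomCond P s α := by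
  intro n
  induction n with
  | zero =>
    rintro ⟨g, -, h⟩
    exact absurd h (by simp)
  | succ n ih =>
    rintro (h | ⟨s', α', hs', hα', hdom, heq⟩)
    · obtain ⟨m, hm, h1, h2, h3⟩ := ih h
      exact ⟨m, Nat.lt_succ_of_lt hm, h1, h2, h3⟩
    · obtain ⟨hl, hr⟩ : s'.toList = s.toList ∧ α' = α := by
        injection heq.symm with h1 h2
        exact ⟨h1, h2⟩
      obtain rfl : s' = s := Finset.toList_inj' hl
      subst hr
      exact ⟨n, Nat.lt_succ_self n, hs', hα', hdom⟩

/-- If a finite set is contained in the union of the stages, it is contained in one stage. -/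
lemma finset_subset_stage (P : PartialPair G) (s : Finset (Pre G))
    (h : ↑s ⊆ compCarrier P) : ∃ n, ↑s ⊆ compStage P n := by
  classical
  induction s using Finset.induction with
  | empty => exact ⟨0, by simp⟩
  | insert _ _ hx ih =>
    rename_i x t
    obtain ⟨n, hn⟩ := ih (fun y hy => h (by simp [hy]))
    have hx' : x ∈ compCarrier P := h (by simp)
    obtain ⟨m, hm⟩ := Set.mem_iUnion.mp hx'
    refine ⟨max n m, ?_⟩
    intro y hy
    rcases Finset.mem_insert.mp (by exact_mod_cast hy) with rfl | hy
    · exact compStage_mono P (le_max_right n m) hm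
    · exact compStage_mono P (le_max_left n m) (hn hy)

lemma compCode_mem_carrier (P : PartialPair G) (hP : P.Good)
    {s : Finset (Pre G)} {α : Pre G}
    (hs : ↑s ⊆ compCarrier P) (hα : α ∈ compCarrier P) :
    compCode P (s, α) ∈ compCarrier P := by
  rw [compCode]
  split_ifs with h
  · have hspec := h.choose_spec.choose_spec.choose_spec.2.2
    have hmem := (hP.1 _ _ _ hspec).2.2
    exact Set.mem_iUnion.mpr ⟨0, ⟨_, hmem, rfl⟩⟩
  · obtain ⟨n, hn⟩ := finset_subset_stage P s hs
    obtain ⟨m, hm⟩ := Set.mem_iUnion.mp hα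
    refine Set.mem_iUnion.mpr ⟨max n m + 1, Or.inr ⟨s, α, ?_, ?_, h, rfl⟩⟩
    · exact fun y hy => compStage_mono P (le_max_left n m) (hn hy)
    · exact compStage_mono P (le_max_right n m) hm

/-- Conclusion extractor from DomCond. -/
lemma domCond_conclusion (P : PartialPair G) (hP : P.Good) {s : Finset (Pre G)} {α : Pre G}
    (h : DomCond P s α) :
    ∃ α₀ : G, α = Pre.base α₀ ∧
      (∃ (s₀ : Finset G) (γ : G), P.code (s₀, α₀) = some γ) ∧
      α₀ ∈ P.carrier := by
  obtain ⟨s₀, α₀, γ, -, rfl, hc⟩ := h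
  exact ⟨α₀, rfl, ⟨s₀, γ, hc⟩, (hP.1 s₀ α₀ γ hc).2.1⟩

/-- Main inductive lemma. -/
lemma key_lemma (P : PartialPair G) (hP : P.Good) :
    ∀ n : ℕ, ∀ (c : Finset (Pre G)) (α : Pre G),
      ↑c ⊆ compStage P n →
      ↑c ⊆ (compPair P).interp deltaTerm botEnv →
      (α ∈ (compPair P).carrier ∧ ∃ c₂ : Finset (Pre G), ↑c₂ ⊆ (↑c : Set (Pre G)) ∧
        ∃ γ : Pre G, (compPair P).code (c₂, α) = some γ ∧ γ ∈ (↑c : Set (Pre G))) →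
      ∃ α₀ : G, α = Pre.base α₀ ∧
        (∃ (s₀ : Finset G) (γ : G), P.code (s₀, α₀) = some γ) ∧
        α₀ ∈ P.carrier := by
  intro n
  induction n using Nat.strong_induction_on with
  | _ n ih =>
    intro c α hcn hcδ hα
    obtain ⟨hαE, c₂, hc₂, γ', hcode, hγ'c⟩ := hα
    simp only [compPair] at hcode
    split_ifs at hcode with hcond
    · rw [Option.some_inj] at hcode
      by_cases hd : DomCond P c₂ α
      · exact domCond_conclusion P hP hd
      · rw [compCode, dif_neg hd] at hcode
        -- γ' = node c₂.toList α, and γ' ∈ c ⊆ δ^E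
        have hγδ : γ' ∈ (compPair P).interp deltaTerm botEnv := hcδ hγ'c
        simp only [deltaTerm, PartialPair.interp, Set.mem_setOf_eq, consEnv] at hγδ
        obtain ⟨b, β, hcb, hβ⟩ := hγδ
        simp only [compPair] at hcb
        split_ifs at hcb with hcond2
        · rw [Option.some_inj] at hcb
          rw [compCode] at hcb
          split_ifs at hcb with hd2
          · rw [← hcode] at hcb
            exact absurd hcb (by simp)
          · rw [← hcode] at hcb
            injection hcb with h1 h2
            have hb : b = c₂ := Finset.toList_inj' h1
            subst hb
            subst h2
            have hγ'stage : γ' ∈ compStage P n := hcn hγ'c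
            rw [← hcode] at hγ'stage
            obtain ⟨m, hm, hc₂m, -, -⟩ := node_mem_stage P hγ'stage
            exact ih m hm _ _ hc₂m (hc₂.trans hcδ) hβ

end Aux

/-- **`Ω` in a completion.** If `α ∈ Ω^{E_A}` then there is a finite `a` with
`(a, α) ∈ dom(c_A)`; hence `α ∈ A` (i.e. `Ω^{E_A} ⊆ A`). -/

theorem omega_interp_completion_subset_base {G : Type*}
    (P : PartialPair G) (hP : P.Good) (α : Pre G)
    (hα : α ∈ (compPair P).interp omegaTerm botEnv) :
    ∃ α₀ : G, α = Pre.base α₀ ∧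
      (∃ (s₀ : Finset G) (γ : G), P.code (s₀, α₀) = some γ) ∧
      α₀ ∈ P.carrier := by
  simp only [omegaTerm, PartialPair.interp, Set.mem_setOf_eq] at hα
  obtain ⟨hαE, a, haδ, γ, hcode, hγδ⟩ := hα
  simp only [compPair] at hcode
  split_ifs at hcode with hcond
  rw [Option.some_inj] at hcode
  by_cases hd : DomCond P a α
  · exact domCond_conclusion P hP hd
  · rw [compCode, dif_neg hd] at hcode
    simp only [deltaTerm, PartialPair.interp, Set.mem_setOf_eq, consEnv] at hγδ
    obtain ⟨b, β, hcb, hβ⟩ := hγδ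
    simp only [compPair] at hcb
    split_ifs at hcb with hcond2
    rw [Option.some_inj] at hcb
    rw [compCode] at hcb
    split_ifs at hcb with hd2
    · rw [← hcode] at hcb
      exact absurd hcb (by simp)
    · rw [← hcode] at hcb
      injection hcb with h1 h2
      have hb : b = a := Finset.toList_inj' h1
      subst hb
      subst h2
      obtain ⟨n, hn⟩ := finset_subset_stage P _ hcond.1
      exact key_lemma P hP n _ _ hn haδ hβ
end

section
/- For every graph model G there exists a sub graph model P of G with a countable carrier set such that P and G satisfy exactly the same inequations M ⊑ N between closed λ-terms (i.e., Ord(P) = Ord(G)), and hence the same equations. -/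
open Classical in
/-- The partial pair induced on a subset `P` of the carrier of a graph model
`(G, c)` by restricting the code map to `P* × P`. -/
noncomputable def subPairOf {G : Type*} (c : Finset G × G → G) (P : Set G) :
    PartialPair G :=
  ⟨P, fun p => if ↑p.1 ⊆ P ∧ p.2 ∈ P then some (c p) else none⟩

/-! ### Auxiliary development for the Löwenheim–Skolem theorem -/

open Classical in
theorem Term.encodeT_injective : Function.Injective Term.encodeT := by
  intro M N h
  induction M generalizing N with
  | var n =>
    cases N with
    | var m => simp only [Term.encodeT] at h; exact congrArg Term.var (by omega)
    | app A B => simp only [Term.encodeT] at h; omega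
    | lam A => simp only [Term.encodeT] at h; omega
  | app M1 M2 ih1 ih2 =>
    cases N with
    | var m => simp only [Term.encodeT] at h; omega
    | app A B =>
      simp only [Term.encodeT] at h
      have hp : Nat.pair (Term.encodeT M1) (Term.encodeT M2)
          = Nat.pair (Term.encodeT A) (Term.encodeT B) := by omega
      have h1 := congrArg Nat.unpair hp
      simp only [Nat.unpair_pair] at h1
      rw [Prod.ext_iff] at h1
      exact congrArg₂ Term.app (ih1 h1.1) (ih2 h1.2)
    | lam A => simp only [Term.encodeT] at h; omega
  | lam M1 ih =>
    cases N with
    | var m => simp only [Term.encodeT] at h; omega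
    | app A B => simp only [Term.encodeT] at h; omega
    | lam A => simp only [Term.encodeT] at h; exact congrArg Term.lam (ih (N := A) (by omega))

instance : Countable Term := ⟨⟨Term.encodeT, Term.encodeT_injective⟩⟩

section LSAux

open Classical

variable {G : Type*} (c : Finset G × G → G)

lemma full_var_mem (n : ℕ) (ρ : ℕ → Set G) :
    (fullPair c).interp (Term.var n) ρ = ρ n := rfl

lemma full_app_mem (M N : Term) (ρ : ℕ → Set G) (α : G) :
    α ∈ (fullPair c).interp (Term.app M N) ρ ↔
      ∃ a : Finset G, ↑a ⊆ (fullPair c).interp N ρ ∧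
        c (a, α) ∈ (fullPair c).interp M ρ := by
  simp [PartialPair.interp, fullPair]

lemma full_lam_mem (M : Term) (ρ : ℕ → Set G) (β : G) :
    β ∈ (fullPair c).interp (Term.lam M) ρ ↔
      ∃ (a : Finset G) (α : G), β = c (a, α) ∧
        α ∈ (fullPair c).interp M (consEnv ↑a ρ) := by
  simp [PartialPair.interp, fullPair, eq_comm]

lemma sub_app_mem (P : Set G) (M N : Term) (ρ : ℕ → Set G) (α : G) :
    α ∈ (subPairOf c P).interp (Term.app M N) ρ ↔
      α ∈ P ∧ ∃ a : Finset G, ↑a ⊆ (subPairOf c P).interp N ρ ∧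
        ∃ γ : G, (subPairOf c P).code (a, α) = some γ ∧
          γ ∈ (subPairOf c P).interp M ρ := Iff.rfl

lemma sub_lam_mem (P : Set G) (M : Term) (ρ : ℕ → Set G) (β : G) :
    β ∈ (subPairOf c P).interp (Term.lam M) ρ ↔
      ∃ (a : Finset G) (α : G), (subPairOf c P).code (a, α) = some β ∧
        α ∈ (subPairOf c P).interp M (consEnv ↑a ρ) := Iff.rfl

lemma subPair_code_eq (P : Set G) (a : Finset G) (α γ : G) :
    (subPairOf c P).code (a, α) = some γ ↔ (↑a ⊆ P ∧ α ∈ P) ∧ γ = c (a, α) := by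
  simp only [subPairOf]
  split_ifs with h
  · simp [h, eq_comm]
  · simp [h]

/-- Skolem witness for membership in the interpretation of an application. -/
noncomputable def skw (M N : Term) (ρ : ℕ → Set G) (α : G) : Finset G :=
  if h : ∃ a : Finset G, ↑a ⊆ (fullPair c).interp N ρ ∧
      c (a, α) ∈ (fullPair c).interp M ρ then h.choose else ∅

lemma skw_spec {M N : Term} {ρ : ℕ → Set G} {α : G}
    (h : α ∈ (fullPair c).interp (Term.app M N) ρ) :
    ↑(skw c M N ρ α) ⊆ (fullPair c).interp N ρ ∧
      c (skw c M N ρ α, α) ∈ (fullPair c).interp M ρ := by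
  rw [full_app_mem] at h
  rw [skw, dif_pos h]
  exact h.choose_spec

/-- Decoding set: the components of `β` under the injective code map. -/
noncomputable def decSet (β : G) : Set G :=
  if h : ∃ p : Finset G × G, c p = β then ↑h.choose.1 ∪ {h.choose.2} else ∅

lemma decSet_finite (β : G) : (decSet c β).Finite := by
  rw [decSet]; split_ifs
  · exact (Finset.finite_toSet _).union (Set.finite_singleton _)
  · exact Set.finite_empty

lemma decSet_spec (hc : Function.Injective c) {β : G} {p : Finset G × G} (hp : c p = β) :
    ↑p.1 ∪ {p.2} ⊆ decSet c β := by
  have h : ∃ q : Finset G × G, c q = β := ⟨p, hp⟩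
  rw [decSet, dif_pos h]
  have he : h.choose = p := hc (h.choose_spec.trans hp.symm)
  rw [he]

/-- Environments coming from finite lists of finite sets. -/
def envOfList (l : List (Finset G)) : ℕ → Set G := fun k => ↑(l.getD k ∅)

lemma envOfList_nil : envOfList ([] : List (Finset G)) = botEnv := by
  funext k; simp [envOfList, botEnv]

lemma envOfList_cons (a : Finset G) (l : List (Finset G)) :
    consEnv (↑a) (envOfList l) = envOfList (a :: l) := by
  funext k; cases k <;> simp [envOfList, consEnv]

def Envs (S : Set G) : Set (ℕ → Set G) :=
  {ρ | ∃ l : List (Finset G), (∀ a ∈ l, ↑a ⊆ S) ∧ ρ = envOfList l}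

lemma botEnv_mem_Envs (S : Set G) : botEnv ∈ Envs S :=
  ⟨[], by simp, envOfList_nil.symm⟩

lemma consEnv_mem_Envs {S : Set G} {ρ : ℕ → Set G} (h : ρ ∈ Envs S)
    {a : Finset G} (ha : ↑a ⊆ S) : consEnv ↑a ρ ∈ Envs S := by
  obtain ⟨l, hl, rfl⟩ := h
  exact ⟨a :: l, by simpa using ⟨ha, hl⟩, envOfList_cons a l⟩

lemma Envs_subsets {S : Set G} {ρ : ℕ → Set G} (h : ρ ∈ Envs S) (k : ℕ) : ρ k ⊆ S := by
  obtain ⟨l, hl, rfl⟩ := h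
  show ↑(l.getD k ∅) ⊆ S
  rcases lt_or_ge k l.length with hk | hk
  · rw [List.getD_eq_getElem l ∅ hk]
    exact hl _ (List.getElem_mem hk)
  · rw [List.getD_eq_default l ∅ hk]; simp

lemma countable_finsets {S : Set G} (hS : S.Countable) :
    {a : Finset G | ↑a ⊆ S}.Countable := by
  have h1 : {t : Set G | t.Finite ∧ t ⊆ S}.Countable := Set.countable_setOf_finite_subset hS
  refine (h1.preimage Finset.coe_injective).mono ?_
  intro a ha
  exact Set.mem_preimage.2 ⟨a.finite_toSet, ha⟩

lemma countable_Envs {S : Set G} (hS : S.Countable) : (Envs S).Countable := by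
  have hT := countable_finsets hS
  haveI := hT.to_subtype
  have hsub : Envs S ⊆ Set.range
      (fun l : List ↥{a : Finset G | ↑a ⊆ S} => envOfList (l.map (fun x => x.1))) := by
    rintro ρ ⟨l, hl, rfl⟩
    refine ⟨l.attach.map (fun x => ⟨x.1, hl _ x.2⟩), ?_⟩
    simp only [List.map_map]
    simp [List.attach_map_val (l := l)]
  exact (Set.countable_range _).mono hsub

/-- One saturation step. -/
noncomputable def lsStep (S : Set G) : Set G :=
  S ∪ (c '' {p : Finset G × G | ↑p.1 ⊆ S ∧ p.2 ∈ S})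
    ∪ (⋃ β ∈ S, decSet c β)
    ∪ (⋃ (M : Term) (N : Term) (ρ ∈ Envs S) (α ∈ S),
        (↑(skw c M N ρ α) ∪ {c (skw c M N ρ α, α)} : Set G))

lemma subset_lsStep (S : Set G) : S ⊆ lsStep c S :=
  fun _ h => Or.inl (Or.inl (Or.inl h))

lemma lsStep_countable {S : Set G} (hS : S.Countable) : (lsStep c S).Countable := by
  refine ((hS.union ?_).union ?_).union ?_
  · refine Set.Countable.image ?_ c
    refine (((countable_finsets hS).prod hS)).mono ?_
    intro p hp
    exact Set.mem_prod.2 ⟨hp.1, hp.2⟩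
  · exact hS.biUnion fun β _ => (decSet_finite c β).countable
  · refine Set.countable_iUnion fun M => Set.countable_iUnion fun N => ?_
    refine (countable_Envs hS).biUnion fun ρ _ => hS.biUnion fun α _ => ?_
    exact ((skw c M N ρ α).finite_toSet.union (Set.finite_singleton _)).countable

noncomputable def lsChain (S0 : Set G) : ℕ → Set G := fun n => (lsStep c)^[n] S0

lemma lsChain_succ (S0 : Set G) (n : ℕ) :
    lsChain c S0 (n + 1) = lsStep c (lsChain c S0 n) :=
  Function.iterate_succ_apply' _ _ _

lemma lsChain_mono (S0 : Set G) : Monotone (lsChain c S0) :=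
  monotone_nat_of_le_succ fun n => by
    rw [lsChain_succ]; exact subset_lsStep c _

/-- The countable saturated subset. -/
noncomputable def lsPset (S0 : Set G) : Set G := ⋃ n, lsChain c S0 n

lemma lsChain_subset_Pset (S0 : Set G) (n : ℕ) : lsChain c S0 n ⊆ lsPset c S0 :=
  Set.subset_iUnion _ n

lemma finite_subset_lsChain (S0 : Set G) :
    ∀ F : Set G, F.Finite → F ⊆ lsPset c S0 → ∃ n, F ⊆ lsChain c S0 n := by
  intro F hF
  refine Set.Finite.induction_on
    (motive := fun F _ => F ⊆ lsPset c S0 → ∃ n, F ⊆ lsChain c S0 n) F hF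
    (fun _ => ⟨0, by simp⟩) ?_
  · intro a s ha hs ih hsub
    obtain ⟨n1, hn1⟩ := ih (fun x hx => hsub (Set.mem_insert_of_mem _ hx))
    obtain ⟨n2, hn2⟩ := Set.mem_iUnion.1 (hsub (Set.mem_insert _ _))
    exact ⟨max n1 n2, Set.insert_subset (lsChain_mono c S0 (le_max_right n1 n2) hn2)
      (hn1.trans (lsChain_mono c S0 (le_max_left n1 n2)))⟩

lemma lsPset_countable {S0 : Set G} (h0 : S0.Countable) : (lsPset c S0).Countable := by
  refine Set.countable_iUnion fun n => ?_
  induction n with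
  | zero => exact h0
  | succ n ih => rw [lsChain_succ]; exact lsStep_countable c ih

lemma lsPset_code_closed (S0 : Set G) {a : Finset G} {α : G}
    (ha : ↑a ⊆ lsPset c S0) (hα : α ∈ lsPset c S0) : c (a, α) ∈ lsPset c S0 := by
  obtain ⟨n, hn⟩ := finite_subset_lsChain c S0 (↑a ∪ {α})
    ((a.finite_toSet).union (Set.finite_singleton _))
    (Set.union_subset ha (by simpa using hα))
  refine lsChain_subset_Pset c S0 (n + 1) ?_
  rw [lsChain_succ]
  exact Or.inl (Or.inl (Or.inr ⟨(a, α),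
    ⟨fun x hx => hn (Or.inl hx), hn (Or.inr rfl)⟩, rfl⟩))

lemma lsPset_dec_closed (hc : Function.Injective c) {S0 : Set G} {β : G}
    (hβ : β ∈ lsPset c S0) {p : Finset G × G} (hp : c p = β) :
    ↑p.1 ⊆ lsPset c S0 ∧ p.2 ∈ lsPset c S0 := by
  obtain ⟨n, hn⟩ := Set.mem_iUnion.1 hβ
  have hsub : ↑p.1 ∪ {p.2} ⊆ decSet c β := decSet_spec c hc hp
  have hd : decSet c β ⊆ lsChain c S0 (n + 1) := by
    rw [lsChain_succ]
    intro x hx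
    exact Or.inl (Or.inr (Set.mem_biUnion hn hx))
  constructor
  · exact fun x hx => lsChain_subset_Pset c S0 (n + 1) (hd (hsub (Or.inl hx)))
  · exact lsChain_subset_Pset c S0 (n + 1) (hd (hsub (Or.inr rfl)))

lemma lsPset_skolem (S0 : Set G) (M N : Term) (ρ : ℕ → Set G) (α : G)
    (hρ : ρ ∈ Envs (lsPset c S0)) (hα : α ∈ lsPset c S0) :
    ↑(skw c M N ρ α) ⊆ lsPset c S0 ∧ c (skw c M N ρ α, α) ∈ lsPset c S0 := by
  obtain ⟨l, hl, rfl⟩ := hρ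
  have hFfin : ({α} ∪ ⋃ a ∈ l, (↑a : Set G)).Finite :=
    (Set.finite_singleton α).union
      (Set.Finite.biUnion l.finite_toSet fun a _ => a.finite_toSet)
  have hFsub : ({α} ∪ ⋃ a ∈ l, (↑a : Set G)) ⊆ lsPset c S0 :=
    Set.union_subset (by simpa using hα) (Set.iUnion₂_subset fun a ha => hl a ha)
  obtain ⟨n, hn⟩ := finite_subset_lsChain c S0 _ hFfin hFsub
  have hρn : envOfList l ∈ Envs (lsChain c S0 n) :=
    ⟨l, fun a ha x hx => hn (Or.inr (Set.mem_biUnion ha hx)), rfl⟩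
  have hαn : α ∈ lsChain c S0 n := hn (Or.inl rfl)
  have hstep : (↑(skw c M N (envOfList l) α)
      ∪ {c (skw c M N (envOfList l) α, α)} : Set G) ⊆ lsChain c S0 (n + 1) := by
    rw [lsChain_succ]
    intro x hx
    refine Or.inr ?_
    simp only [Set.mem_iUnion]
    exact ⟨M, N, envOfList l, hρn, α, hαn, hx⟩
  constructor
  · exact fun x hx => lsChain_subset_Pset c S0 (n + 1) (hstep (Or.inl hx))
  · exact lsChain_subset_Pset c S0 (n + 1) (hstep (Or.inr rfl))

/-- Soundness: interpretation in the subpair is included in that of the full pair. -/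
lemma sub_interp_subset_full (P : Set G) :
    ∀ (M : Term) (ρ : ℕ → Set G),
      (subPairOf c P).interp M ρ ⊆ (fullPair c).interp M ρ := by
  intro M
  induction M with
  | var n => exact fun ρ α h => h
  | app M N ihM ihN =>
    intro ρ α h
    obtain ⟨hαP, a, haN, γ, hcode, hγ⟩ := (sub_app_mem c P M N ρ α).1 h
    rw [subPair_code_eq] at hcode
    obtain ⟨⟨haP, hαP'⟩, rfl⟩ := hcode
    exact (full_app_mem c M N ρ α).2 ⟨a, fun x hx => ihN ρ (haN hx), ihM ρ hγ⟩
  | lam M ih =>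
    intro ρ β h
    obtain ⟨a, α, hcode, hα⟩ := (sub_lam_mem c P M ρ β).1 h
    rw [subPair_code_eq] at hcode
    obtain ⟨⟨haP, hαP⟩, rfl⟩ := hcode
    exact (full_lam_mem c M ρ _).2 ⟨a, α, rfl, ih _ hα⟩

/-- The subpair interpretation lives inside the carrier. -/
lemma sub_interp_subset_carrier (P : Set G)
    (hcode : ∀ (a : Finset G) (α : G), ↑a ⊆ P → α ∈ P → c (a, α) ∈ P) :
    ∀ (M : Term) (ρ : ℕ → Set G), (∀ k, ρ k ⊆ P) →
      (subPairOf c P).interp M ρ ⊆ P := by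
  intro M
  induction M with
  | var n => exact fun ρ hρ α h => hρ n h
  | app M N ihM ihN => exact fun ρ hρ α h => ((sub_app_mem c P M N ρ α).1 h).1
  | lam M ih =>
    intro ρ hρ β h
    obtain ⟨a, α, hcd, _⟩ := (sub_lam_mem c P M ρ β).1 h
    rw [subPair_code_eq] at hcd
    obtain ⟨⟨haP, hαP⟩, rfl⟩ := hcd
    exact hcode a α haP hαP

/-- Completeness: on saturated `P`, the full interpretation intersected with `P`
is included in the subpair interpretation. -/
lemma full_inter_subset_sub (P : Set G)
    (hdec : ∀ β ∈ P, ∀ p : Finset G × G, c p = β → ↑p.1 ⊆ P ∧ p.2 ∈ P)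
    (hskl : ∀ (M N : Term) (ρ : ℕ → Set G) (α : G), ρ ∈ Envs P → α ∈ P →
        ↑(skw c M N ρ α) ⊆ P ∧ c (skw c M N ρ α, α) ∈ P) :
    ∀ (M : Term) (ρ : ℕ → Set G), ρ ∈ Envs P →
      (fullPair c).interp M ρ ∩ P ⊆ (subPairOf c P).interp M ρ := by
  intro M
  induction M with
  | var n => exact fun ρ _ α h => h.1
  | app M N ihM ihN =>
    rintro ρ hρ α ⟨hfull, hαP⟩
    obtain ⟨hw, hcw⟩ := hskl M N ρ α hρ hαP
    obtain ⟨hwN, hcwM⟩ := skw_spec c hfull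
    refine (sub_app_mem c P M N ρ α).2
      ⟨hαP, skw c M N ρ α, ?_, c (skw c M N ρ α, α), ?_, ?_⟩
    · exact fun x hx => ihN ρ hρ ⟨hwN hx, hw hx⟩
    · rw [subPair_code_eq]; exact ⟨⟨hw, hαP⟩, rfl⟩
    · exact ihM ρ hρ ⟨hcwM, hcw⟩
  | lam M ih =>
    rintro ρ hρ β ⟨hfull, hβP⟩
    rw [full_lam_mem] at hfull
    obtain ⟨a, α, rfl, hα⟩ := hfull
    obtain ⟨haP, hαP⟩ := hdec _ hβP (a, α) rfl
    refine (sub_lam_mem c P M ρ _).2 ⟨a, α, ?_, ?_⟩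
    · rw [subPair_code_eq]; exact ⟨⟨haP, hαP⟩, rfl⟩
    · exact ih _ (consEnv_mem_Envs hρ haP) ⟨hα, hαP⟩

/-- Witness set for a failed inequation between closed terms. -/
noncomputable def pairW (M N : Term) : Set G :=
  if h : ∃ α : G, α ∈ (fullPair c).interp M botEnv ∧
      α ∉ (fullPair c).interp N botEnv then {h.choose} else ∅

lemma pairW_countable (M N : Term) : (pairW c M N).Countable := by
  rw [pairW]; split_ifs
  · exact Set.countable_singleton _
  · exact Set.countable_empty

lemma pairW_spec {M N : Term}
    (h : ¬ ((fullPair c).interp M botEnv ⊆ (fullPair c).interp N botEnv)) :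
    ∃ α ∈ pairW c M N, α ∈ (fullPair c).interp M botEnv ∧
      α ∉ (fullPair c).interp N botEnv := by
  have he : ∃ α : G, α ∈ (fullPair c).interp M botEnv ∧
      α ∉ (fullPair c).interp N botEnv := by
    rcases Set.not_subset.1 h with ⟨α, h1, h2⟩; exact ⟨α, h1, h2⟩
  rw [pairW, dif_pos he]
  exact ⟨he.choose, rfl, he.choose_spec⟩

end LSAux

/-- **Löwenheim–Skolem theorem for graph models.** Every graph model `G` has a
sub graph model `P` with countable carrier satisfying exactly the same inequations
(and hence the same equations) between closed λ-terms as `G`. -/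
theorem lowenheim_skolem_graph_models {G : Type*} [Infinite G]
    (c : Finset G × G → G) (hc : Function.Injective c) :
    ∃ P : Set G, P.Countable ∧ P.Infinite ∧
      (∀ (a : Finset G) (α : G), ↑a ⊆ P → α ∈ P → c (a, α) ∈ P) ∧
      ∀ M N : Term, Term.Closed M → Term.Closed N →
        (((subPairOf c P).interp M botEnv ⊆ (subPairOf c P).interp N botEnv) ↔
          ((fullPair c).interp M botEnv ⊆ (fullPair c).interp N botEnv)) ∧
        (((subPairOf c P).interp M botEnv = (subPairOf c P).interp N botEnv) ↔
          ((fullPair c).interp M botEnv = (fullPair c).interp N botEnv)) := by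
  classical
  set S0 : Set G := Set.range (fun n : ℕ => (Infinite.natEmbedding G) n)
      ∪ ⋃ (M : Term) (N : Term), pairW c M N with hS0
  set P : Set G := lsPset c S0 with hP
  have hS0P : S0 ⊆ P := lsChain_subset_Pset c S0 0
  have hcount : P.Countable := lsPset_countable c
    ((Set.countable_range _).union
      (Set.countable_iUnion fun M => Set.countable_iUnion fun N => pairW_countable c M N))
  have hcode : ∀ (a : Finset G) (α : G), ↑a ⊆ P → α ∈ P → c (a, α) ∈ P :=
    fun a α ha hα => lsPset_code_closed c S0 ha hα
  have hinf : P.Infinite :=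
    Set.infinite_of_injective_forall_mem (f := fun n : ℕ => (Infinite.natEmbedding G) n)
      (Infinite.natEmbedding G).injective
      (fun n => hS0P (Or.inl ⟨n, rfl⟩))
  have hdec : ∀ β ∈ P, ∀ p : Finset G × G, c p = β → ↑p.1 ⊆ P ∧ p.2 ∈ P :=
    fun β hβ p hp => lsPset_dec_closed c hc hβ hp
  have hskl : ∀ (M N : Term) (ρ : ℕ → Set G) (α : G), ρ ∈ Envs P → α ∈ P →
      ↑(skw c M N ρ α) ⊆ P ∧ c (skw c M N ρ α, α) ∈ P :=
    fun M N ρ α hρ hα => lsPset_skolem c S0 M N ρ α hρ hα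
  have hA := sub_interp_subset_full c P
  have hB := sub_interp_subset_carrier c P hcode
  have hC := full_inter_subset_sub c P hdec hskl
  have key : ∀ M N : Term,
      ((subPairOf c P).interp M botEnv ⊆ (subPairOf c P).interp N botEnv) ↔
        ((fullPair c).interp M botEnv ⊆ (fullPair c).interp N botEnv) := by
    intro M N
    constructor
    · intro hsub
      by_contra hng
      obtain ⟨α, hαW, h1, h2⟩ := pairW_spec c hng
      have hαP : α ∈ P := hS0P (Or.inr (Set.mem_iUnion.2 ⟨M, Set.mem_iUnion.2 ⟨N, hαW⟩⟩))
      exact h2 (hA N botEnv (hsub (hC M botEnv (botEnv_mem_Envs P) ⟨h1, hαP⟩)))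
    · intro hsub α hα
      have h1 : α ∈ (fullPair c).interp M botEnv := hA M botEnv hα
      have h2 : α ∈ P := hB M botEnv (fun k => Set.empty_subset P) hα
      exact hC N botEnv (botEnv_mem_Envs P) ⟨hsub h1, h2⟩
  refine ⟨P, hcount, hinf, hcode, fun M N _ _ => ⟨key M N, ?_⟩⟩
  rw [Set.Subset.antisymm_iff, Set.Subset.antisymm_iff]
  exact and_congr (key M N) (key N M)
end
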